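/- arXiv:2203.05451 — 3 statements merged into one kernel-verified Lean document; each statement's English description precedes it below -/
import Mathlib

section
/- For every integer t ≥ 21, the integer n = 23·2^t + 1471 satisfies s(n) = s(n^2) = 13, where s is the binary digit sum. -/
/-- binary digit sum -/
def s (n : ℕ) : ℕ := (Nat.digits 2 n).sum

/-! For `t ≥ 21` the binary blocks of `n = 23·2^t + 1471` and of
`n² = 529·2^(2t) + 33833·2^(t+1) + 2163841` do not overlap, so the digit sums add up:
`s 23 + s 1471 = 4 + 9` and `s 529 + s 33833 + s 2163841 = 3 + 5 + 5`. -/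

theorem Nat.digits_sum_add_base_pow_mul {b k m n : ℕ} (hb : 1 < b) (hn : n < b ^ k) :
    (Nat.digits b (n + b ^ k * m)).sum = (Nat.digits b n).sum + (Nat.digits b m).sum := by
  rcases Nat.eq_zero_or_pos m with rfl | hm
  · simp
  have hlen : (Nat.digits b n).length ≤ k := (Nat.digits_length_le_iff hb n).2 hn
  obtain ⟨j, hk⟩ := Nat.exists_eq_add_of_le hlen
  rw [hk, ← Nat.digits_append_zeroes_append_digits hb hm]
  simp

theorem s_add_two_pow_mul {k m n : ℕ} (hn : n < 2 ^ k) : s (n + 2 ^ k * m) = s n + s m :=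
  Nat.digits_sum_add_base_pow_mul one_lt_two hn

theorem stmt_7 (t : ℕ) (ht : 21 ≤ t) :
    s (23 * 2 ^ t + 1471) = 13 ∧ s ((23 * 2 ^ t + 1471) ^ 2) = 13 := by
  obtain ⟨u, rfl⟩ : ∃ u, t = u + 1 := ⟨t - 1, by omega⟩
  have h1471 : 1471 < 2 ^ (u + 1) :=
    lt_of_lt_of_le (by norm_num) (Nat.pow_le_pow_right two_pos ht)
  have h33833 : 33833 < 2 ^ u :=
    lt_of_lt_of_le (by norm_num) (Nat.pow_le_pow_right (n := 2) two_pos (by omega : 20 ≤ u))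
  have h2163841 : 2163841 < 2 ^ (u + 2) :=
    lt_of_lt_of_le (by norm_num) (Nat.pow_le_pow_right (n := 2) two_pos (by omega : 22 ≤ u + 2))
  have hsq : (23 * 2 ^ (u + 1) + 1471) ^ 2 = 2163841 + 2 ^ (u + 2) * (33833 + 2 ^ u * 529) := by
    ring
  constructor
  · rw [add_comm, mul_comm, s_add_two_pow_mul h1471]
    norm_num [s]
  · rw [hsq, s_add_two_pow_mul h2163841, s_add_two_pow_mul h33833]
    norm_num [s]
end

section
/- For every integer t ≥ 21, the integer n = 727·2^t + 727 satisfies s(n) = 14 and s(n^2) = 15, where s is the binary digit sum. -/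
lemma s_split (m b k : ℕ) (hm : 0 < m) (hb : b < 2 ^ k) :
    s (b + 2 ^ k * m) = s b + s m := by
  have hlen : (Nat.digits 2 b).length ≤ k := by
    rcases Nat.eq_zero_or_pos b with rfl | hb0
    · simp
    · rw [Nat.digits_len 2 b one_lt_two hb0.ne']
      exact Nat.succ_le_of_lt (Nat.log_lt_of_lt_pow hb0.ne' hb)
  obtain ⟨j, hj⟩ := Nat.le.dest hlen
  simp only [s]
  rw [← hj, ← Nat.digits_append_zeroes_append_digits one_lt_two hm]
  simp

theorem stmt_10 (t : ℕ) (ht : 21 ≤ t) :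
    s (727 * 2 ^ t + 727) = 14 ∧ s ((727 * 2 ^ t + 727) ^ 2) = 15 := by
  have h1 : (727 : ℕ) < 2 ^ t :=
    lt_of_lt_of_le (by norm_num) (Nat.pow_le_pow_right (by norm_num) ht)
  have h2 : (528529 : ℕ) < 2 ^ t :=
    lt_of_lt_of_le (by norm_num) (Nat.pow_le_pow_right (by norm_num) ht)
  have h3 : (1057058 : ℕ) < 2 ^ t :=
    lt_of_lt_of_le (by norm_num) (Nat.pow_le_pow_right (by norm_num) ht)
  have e1 : 727 * 2 ^ t + 727 = 727 + 2 ^ t * 727 := by ring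
  have e2 : (727 * 2 ^ t + 727) ^ 2 = 528529 + 2 ^ t * (1057058 + 2 ^ t * 528529) := by ring
  have s727 : s 727 = 7 := by simp [s, Nat.digits_def']
  have sA : s 528529 = 5 := by simp [s, Nat.digits_def']
  have sB : s 1057058 = 5 := by simp [s, Nat.digits_def']
  constructor
  · rw [e1, s_split 727 727 t (by norm_num) h1, s727]
  · rw [e2, s_split _ _ _ (by positivity) h2,
      s_split _ _ _ (by norm_num) h3, sA, sB]
end

section
/- Let n be a positive integer whose binary expansion is x 0 1^(b+1) 0^c (most significant bits first), where b, c ≥ 0 and x is a possibly empty binary word; that is, n = X·2^(b+c+2) + (2^(b+1)−1)·2^c where X is the integer with expansion x. Then the smallest integer m > n with the same binary digit sum as n is m = X·2^(b+c+2) + 2^(b+c+1) + (2^b − 1); i.e., m has binary expansion x 1 0^(c+1) 1^b. -/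
lemma s_pos {n : ℕ} (hn : 0 < n) : 0 < s n := by
  rw [Nat.pos_iff_ne_zero, s, Ne, List.sum_eq_zero_iff]
  intro h
  exact Nat.getLast_digit_ne_zero 2 hn.ne' (h _ (List.getLast_mem _))

lemma s_eq_mod_add_s_div (n : ℕ) : s n = n % 2 + s (n / 2) := by
  rcases Nat.eq_zero_or_pos n with rfl | hn
  · simp [s]
  · simp [s, Nat.digits_def' one_lt_two hn]

/-- Binary concatenation: the digits of `q + 2 ^ t * A` are those of `q`, padded with zeros to
length `t`, followed by those of `A`. -/
lemma s_add_two_pow_mul_s17 {q t : ℕ} (A : ℕ) (hq : q < 2 ^ t) : s (q + 2 ^ t * A) = s q + s A := by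
  rcases Nat.eq_zero_or_pos A with rfl | hA
  · simp [s]
  obtain ⟨k, hk⟩ := Nat.exists_eq_add_of_le ((Nat.digits_length_le_iff one_lt_two q).mpr hq)
  rw [s, hk, ← Nat.digits_append_zeroes_append_digits one_lt_two hA]
  simp [s]

lemma s_two_pow_mul (t A : ℕ) : s (2 ^ t * A) = s A := by
  simpa [s] using s_add_two_pow_mul_s17 (q := 0) A (Nat.two_pow_pos t)

lemma s_one : s 1 = 1 := by simp [s]

lemma s_two_pow (t : ℕ) : s (2 ^ t) = 1 := by
  simpa [s_one] using s_two_pow_mul t 1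

lemma s_two_pow_sub_one (k : ℕ) : s (2 ^ k - 1) = k := by
  induction k with
  | zero => simp [s]
  | succ k ih =>
    have h : 2 ^ (k + 1) = 2 * 2 ^ k := by ring
    rw [s_eq_mod_add_s_div, h, show (2 * 2 ^ k - 1) / 2 = 2 ^ k - 1 by omega, ih]
    have := Nat.one_le_two_pow (n := k)
    omega

lemma s_lt_of_lt_two_pow_sub_one {b e : ℕ} (he : e < 2 ^ b - 1) : s e < b := by
  induction b generalizing e with
  | zero => simp at he
  | succ b ih =>
    have h : 2 ^ (b + 1) = 2 * 2 ^ b := by ring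
    rw [s_eq_mod_add_s_div]
    by_cases hlt : e / 2 < 2 ^ b - 1
    · have := ih hlt
      omega
    · -- `e` is then `2 ^ (b + 1) - 2`, i.e. `b` ones after a zero
      have hdiv : e / 2 = 2 ^ b - 1 := by omega
      rw [hdiv, s_two_pow_sub_one]
      omega

lemma two_pow_sub_one_mul_two_pow (b c : ℕ) :
    (2 ^ (b + 1) - 1) * 2 ^ c = 2 ^ (b + c + 1) - 2 ^ c := by
  rw [Nat.sub_mul, one_mul, ← pow_add, Nat.add_right_comm]

lemma s_ones_mul_two_pow (b c : ℕ) : s ((2 ^ (b + 1) - 1) * 2 ^ c) = b + 1 := by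
  rw [mul_comm, s_two_pow_mul, s_two_pow_sub_one]

lemma s_two_pow_add_ones (b c : ℕ) : s (2 ^ (b + c + 1) + (2 ^ b - 1)) = b + 1 := by
  have h : 2 ^ (b + c + 1) = 2 ^ b * 2 ^ (c + 1) := by ring
  rw [h, add_comm, s_add_two_pow_mul_s17 _ (Nat.sub_lt (Nat.two_pow_pos b) one_pos),
    s_two_pow_sub_one, s_two_pow]

lemma s_ne_of_lt_of_lt {b c q : ℕ} (hlo : (2 ^ (b + 1) - 1) * 2 ^ c < q)
    (hhi : q < 2 ^ (b + c + 1) + (2 ^ b - 1)) : s q ≠ b + 1 := by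
  have hr : 2 ^ c * (2 ^ (b + 1) - 1) = 2 ^ (b + c + 1) - 2 ^ c := by
    rw [mul_comm, two_pow_sub_one_mul_two_pow]
  rw [mul_comm, hr] at hlo
  by_cases hq : q < 2 ^ (b + c + 1)
  · obtain ⟨f, rfl⟩ : ∃ f, q = f + 2 ^ c * (2 ^ (b + 1) - 1) :=
      ⟨q - (2 ^ (b + c + 1) - 2 ^ c), by omega⟩
    have hf : f < 2 ^ c := by omega
    rw [s_add_two_pow_mul_s17 _ hf, s_two_pow_sub_one]
    have := s_pos (show 0 < f by omega)
    omega
  · obtain ⟨e, rfl⟩ : ∃ e, q = e + 2 ^ (b + c + 1) * 1 := ⟨q - 2 ^ (b + c + 1), by omega⟩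
    have he : e < 2 ^ b - 1 := by omega
    have hb : 2 ^ b ≤ 2 ^ (b + c + 1) := Nat.pow_le_pow_right two_pos (by omega)
    rw [s_add_two_pow_mul_s17 1 (by omega), s_one]
    have := s_lt_of_lt_two_pow_sub_one he
    omega

theorem stmt_17_general (X b c n m : ℕ)
    (hn : n = X * 2 ^ (b + c + 2) + (2 ^ (b + 1) - 1) * 2 ^ c)
    (hm : m = X * 2 ^ (b + c + 2) + 2 ^ (b + c + 1) + (2 ^ b - 1)) :
    s m = s n ∧ n < m ∧ ∀ p : ℕ, n < p → p < m → s p ≠ s n := by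
  have hpow : 2 ^ (b + c + 2) = 2 * 2 ^ (b + c + 1) := by ring
  have hb : 2 ^ b ≤ 2 ^ (b + c + 1) := Nat.pow_le_pow_right two_pos (by omega)
  have hb1 : 1 ≤ 2 ^ b := Nat.one_le_two_pow
  have hc : 1 ≤ 2 ^ c := Nat.one_le_two_pow
  have hr := two_pow_sub_one_mul_two_pow b c
  rw [mul_comm X, add_assoc] at hm
  rw [mul_comm X] at hn
  have hsn : s n = b + 1 + s X := by
    rw [hn, add_comm, s_add_two_pow_mul_s17 X (by omega), s_ones_mul_two_pow]
  have hsm : s m = b + 1 + s X := by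
    rw [hm, add_comm, s_add_two_pow_mul_s17 X (by omega), s_two_pow_add_ones]
  refine ⟨hsm.trans hsn.symm, by omega, fun p hnp hpm => ?_⟩
  obtain ⟨q, rfl⟩ : ∃ q, p = q + 2 ^ (b + c + 2) * X := ⟨p - 2 ^ (b + c + 2) * X, by omega⟩
  rw [s_add_two_pow_mul_s17 X (by omega), hsn]
  have := s_ne_of_lt_of_lt (b := b) (c := c) (q := q) (by omega) (by omega)
  omega

theorem stmt_17 (X b c n m : ℕ)
    (hn : n = X * 2 ^ (b + c + 2) + (2 ^ (b + 1) - 1) * 2 ^ c)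
    (hm : m = X * 2 ^ (b + c + 2) + 2 ^ (b + c + 1) + (2 ^ b - 1))
    (hpos : 0 < n) :
    s m = s n ∧ n < m ∧ ∀ p : ℕ, n < p → p < m → s p ≠ s n :=
  stmt_17_general X b c n m hn hm
end
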